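/- Let 0 < p < 1 be fixed. A.a.s., for every integer k ∈ [εn, n − n^{1/4}ln²n) and ñ = k + 14, the subgraph of G(n,p) induced on the last ñ vertices has no vertex of degree at least ñp + √(6·ñp(1−p)·ln ñ). -/

import Mathlib

open Classical Finset Filter

noncomputable def grWeight (n : ℕ) (p : ℝ) (G : SimpleGraph (Fin n)) : ℝ :=
  p ^ G.edgeFinset.card * (1 - p) ^ (n.choose 2 - G.edgeFinset.card)

noncomputable def grPr (n : ℕ) (p : ℝ) (A : Set (SimpleGraph (Fin n))) : ℝ :=
  ∑ G : SimpleGraph (Fin n), if G ∈ A then grWeight n p G else 0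

noncomputable def degIn {n : ℕ} (G : SimpleGraph (Fin n)) (S : Finset (Fin n)) (v : Fin n) : ℕ :=
  (S.filter (fun w => G.Adj v w)).card

noncomputable def lastVerts (n m : ℕ) : Finset (Fin n) :=
  Finset.univ.filter (fun v : Fin n => n - m ≤ (v : ℕ))

/-
The degree of a vertex `v` inside a vertex set `S` with `#S ≤ m` counts the edges of `G(n,p)`
among the at most `m` pairs `{v, w}`, `w ∈ S`, which are independent `Bernoulli(p)` variables.
Their exponential moment is `(p e^λ + 1 - p)^m ≤ exp (m (pλ + p(1-p)λ²/2 + 2λ³))`, so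
Chernoff's bound with `λ = t / (mp(1-p))`, `t = √(6mp(1-p) log m)`, bounds the probability
that this degree reaches `mp + t` by `m^(-3) · exp (2mλ³) ≤ m^(-5/2)` as soon as
`m ≥ C_p log m`. A union bound over the at most `m = k + 14` vertices and the fewer than `n`
values `k ≥ εn` leaves a failure probability of at most `n (εn)^(-3/2) → 0`.
-/

open Real SimpleGraph

section Model

variable {V : Type*} [Fintype V] [DecidableEq V]

-- The `Fintype` instance is left arbitrary: `grWeight` sees the classical one.
lemma edgeFinset_fromEdgeSet_of_subset {s : Finset (Sym2 V)}
    (hs : s ⊆ (⊤ : SimpleGraph V).edgeFinset)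
    {_ : Fintype (fromEdgeSet (s : Set (Sym2 V))).edgeSet} :
    (fromEdgeSet (s : Set (Sym2 V))).edgeFinset = s := by
  refine Finset.coe_injective ?_
  rw [coe_edgeFinset, edgeSet_fromEdgeSet, sdiff_eq_left, Set.disjoint_left]
  intro e hes hdiag
  simpa [hdiag] using hs hes

lemma sum_simpleGraph_eq_sum_powerset {M : Type*} [AddCommMonoid M] (F : SimpleGraph V → M) :
    ∑ G, F G = ∑ s ∈ (⊤ : SimpleGraph V).edgeFinset.powerset, F (fromEdgeSet s) := by
  refine Finset.sum_nbij' (fun G => G.edgeFinset) (fun s => fromEdgeSet s) ?_ ?_ ?_ ?_ ?_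
  · exact fun G _ => Finset.mem_powerset.mpr (edgeFinset_mono le_top)
  · exact fun _ _ => Finset.mem_univ _
  · intro G _
    simp
  · exact fun s hs => edgeFinset_fromEdgeSet_of_subset (Finset.mem_powerset.mp hs)
  · intro G _
    simp

end Model

lemma mul_exp_add_one_sub_le_exp {p l : ℝ} (hp0 : 0 ≤ p) (hp1 : p ≤ 1) (hl0 : 0 ≤ l)
    (hl1 : l ≤ 1) :
    p * exp l + (1 - p) ≤ exp (p * l + p * (1 - p) * l ^ 2 / 2 + 2 * l ^ 3) := by
  have hexp_le : exp l ≤ 1 + l + l ^ 2 / 2 + 2 / 9 * l ^ 3 := by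
    have h := Real.exp_bound (x := l) (by rwa [abs_of_nonneg hl0]) (n := 3) (by norm_num)
    simp only [Finset.sum_range_succ, Finset.sum_range_zero, abs_of_nonneg hl0] at h
    norm_num [Nat.factorial] at h
    linarith [(abs_le.mp h).2]
  set R := p * l + p * (1 - p) * l ^ 2 / 2 + 2 * l ^ 3 with hR
  have hpl : p * l ≤ R := by
    have : 0 ≤ 1 - p := by linarith
    have : 0 ≤ p * (1 - p) * l ^ 2 / 2 + 2 * l ^ 3 := by positivity
    linarith
  have hle_exp : 1 + R + R ^ 2 / 2 ≤ exp R := by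
    have h := Real.sum_le_exp_of_nonneg (hpl.trans' (by positivity)) 3
    norm_num [Finset.sum_range_succ, Nat.factorial] at h
    linarith
  nlinarith [mul_le_mul_of_nonneg_left hexp_le hp0, pow_le_pow_left₀ (by positivity) hpl 2, hR,
    mul_le_mul_of_nonneg_right hp1 (pow_nonneg hl0 3)]

lemma eventually_const_mul_log_le_mul (a : ℝ) {c : ℝ} (hc : 0 < c) :
    ∀ᶠ x : ℝ in atTop, a * log x ≤ x * c := by
  filter_upwards [(isLittleO_log_id_atTop.const_mul_left a).bound hc, eventually_ge_atTop 0]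
    with x hx hx0
  rw [norm_eq_abs, norm_eq_abs, id, abs_of_nonneg hx0, mul_comm c] at hx
  exact (le_abs_self _).trans hx

lemma tendsto_natCast_mul_rpow_neg_three_halves {ε : ℝ} (hε : 0 < ε) :
    Tendsto (fun n : ℕ => n * (ε * n) ^ (-(3 / 2) : ℝ)) atTop (nhds 0) := by
  have hεn : Tendsto (fun n : ℕ => ε * n) atTop atTop :=
    tendsto_natCast_atTop_atTop.const_mul_atTop hε
  have h := ((tendsto_rpow_neg_atTop (by norm_num : (0 : ℝ) < 1 / 2)).comp hεn).const_mul ε⁻¹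
  rw [mul_zero] at h
  refine h.congr fun n => ?_
  have hεn0 : 0 ≤ ε * n := by positivity
  rw [Function.comp_apply, show (-(1 / 2) : ℝ) = 1 + -(3 / 2) by norm_num,
    rpow_add' hεn0 (by norm_num), rpow_one]
  field_simp

noncomputable def degBound (p : ℝ) (m : ℕ) : ℝ := m * p + √(6 * m * p * (1 - p) * log m)

noncomputable def largeDegreeEvent (n : ℕ) (p : ℝ) (m : ℕ) : Set (SimpleGraph (Fin n)) :=
  {G | ∃ v ∈ lastVerts n m, degBound p m ≤ degIn G (lastVerts n m) v}

section GnpLemmas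

variable {n : ℕ} {p : ℝ}

lemma sum_grWeight_mul_pow_card_inter (c : ℝ) (T : Finset (Sym2 (Fin n))) :
    ∑ G, grWeight n p G * c ^ #(G.edgeFinset ∩ T)
      = (p * c + (1 - p)) ^ #((⊤ : SimpleGraph (Fin n)).edgeFinset ∩ T) := by
  set E := (⊤ : SimpleGraph (Fin n)).edgeFinset
  have hprod := Finset.prod_add (fun e => p * if e ∈ T then c else 1) (fun _ => 1 - p) E
  have hcoord : ∀ e, p * (if e ∈ T then c else 1) + (1 - p)
      = if e ∈ T then p * c + (1 - p) else 1 := fun e => by split_ifs <;> ring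
  simp only [hcoord, Finset.prod_ite_mem, Finset.prod_const, Finset.prod_mul_distrib] at hprod
  rw [hprod, sum_simpleGraph_eq_sum_powerset]
  refine Finset.sum_congr rfl fun s hs => ?_
  have hsE := Finset.mem_powerset.mp hs
  rw [grWeight, edgeFinset_fromEdgeSet_of_subset hsE, Finset.card_sdiff_of_subset hsE,
    card_edgeFinset_top_eq_card_choose_two, Fintype.card_fin]
  ring

lemma sum_grWeight : ∑ G, grWeight n p G = 1 := by
  simpa using sum_grWeight_mul_pow_card_inter (n := n) (p := p) 1 ∅

lemma grPr_compl (A : Set (SimpleGraph (Fin n))) : grPr n p Aᶜ = 1 - grPr n p A := by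
  rw [eq_sub_iff_add_eq, ← sum_grWeight (n := n) (p := p), grPr, grPr, ← Finset.sum_add_distrib]
  refine Finset.sum_congr rfl fun G _ => ?_
  by_cases hG : G ∈ A <;> simp [hG]

lemma grWeight_nonneg (hp0 : 0 ≤ p) (hp1 : p ≤ 1) (G : SimpleGraph (Fin n)) :
    0 ≤ grWeight n p G := by
  have : 0 ≤ 1 - p := by linarith
  unfold grWeight
  positivity

lemma grPr_le_one (hp0 : 0 ≤ p) (hp1 : p ≤ 1) (A : Set (SimpleGraph (Fin n))) :
    grPr n p A ≤ 1 := by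
  rw [← sum_grWeight (n := n) (p := p)]
  refine Finset.sum_le_sum fun G _ => ?_
  split_ifs
  exacts [le_rfl, grWeight_nonneg hp0 hp1 G]

lemma grPr_le_sum_of_subset_biUnion (hp0 : 0 ≤ p) (hp1 : p ≤ 1) {ι : Type*} (s : Finset ι)
    {A : Set (SimpleGraph (Fin n))} (B : ι → Set (SimpleGraph (Fin n)))
    (hA : A ⊆ ⋃ i ∈ s, B i) :
    grPr n p A ≤ ∑ i ∈ s, grPr n p (B i) := by
  have hterm : ∀ i G, 0 ≤ if G ∈ B i then grWeight n p G else 0 := fun i G => by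
    split_ifs
    exacts [grWeight_nonneg hp0 hp1 G, le_rfl]
  simp only [grPr]
  rw [Finset.sum_comm]
  refine Finset.sum_le_sum fun G _ => ?_
  split_ifs with hG
  · obtain ⟨i, hi, hGi⟩ := Set.mem_iUnion₂.mp (hA hG)
    calc grWeight n p G = if G ∈ B i then grWeight n p G else 0 := (if_pos hGi).symm
      _ ≤ _ := Finset.single_le_sum (fun j _ => hterm j G) hi
  · exact Finset.sum_nonneg fun i _ => hterm i G

lemma grPr_le_card_inter_le (hp0 : 0 ≤ p) (hp1 : p ≤ 1) (T : Finset (Sym2 (Fin n))) (x : ℝ)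
    {lam : ℝ} (hlam : 0 ≤ lam) :
    grPr n p {G | x ≤ #(G.edgeFinset ∩ T)}
      ≤ (p * exp lam + (1 - p)) ^ #((⊤ : SimpleGraph (Fin n)).edgeFinset ∩ T)
        * exp (-(lam * x)) := by
  rw [← sum_grWeight_mul_pow_card_inter, Finset.sum_mul]
  refine Finset.sum_le_sum fun G _ => ?_
  have hw := grWeight_nonneg hp0 hp1 G
  rw [mul_assoc, ← exp_nat_mul, ← exp_add]
  split_ifs with hG
  · refine le_mul_of_one_le_right hw (one_le_exp ?_)
    have : x ≤ #(G.edgeFinset ∩ T) := hG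
    nlinarith
  · positivity

lemma degIn_eq_card_edgeFinset_inter (G : SimpleGraph (Fin n)) (S : Finset (Fin n)) (v : Fin n) :
    degIn G S v = #(G.edgeFinset ∩ S.image (fun w => s(v, w))) := by
  rw [degIn, ← Finset.card_image_of_injective _ fun _ _ => Sym2.congr_right.mp]
  congr 1
  ext e
  simp only [Finset.mem_image, Finset.mem_filter, Finset.mem_inter, mem_edgeFinset]
  constructor
  · rintro ⟨w, ⟨hw, hadj⟩, rfl⟩
    exact ⟨hadj, w, hw, rfl⟩
  · rintro ⟨he, w, hw, rfl⟩
    exact ⟨w, ⟨hw, he⟩, rfl⟩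

lemma card_lastVerts_le (m : ℕ) : #(lastVerts n m) ≤ m := by
  have h : #(lastVerts n m) ≤ #(Finset.Ico (n - m) n) := by
    refine Finset.card_le_card_of_injOn (fun v => (v : ℕ)) (fun v hv => ?_)
      Fin.val_injective.injOn
    rw [Finset.coe_Ico, Set.mem_Ico]
    exact ⟨(Finset.mem_filter.mp hv).2, v.isLt⟩
  rw [Nat.card_Ico] at h
  omega

lemma exists_pow_mul_exp_neg_degBound_le (hp0 : 0 < p) (hp1 : p < 1) {m : ℕ}
    (hm : 1 ≤ (m : ℝ)) (hK : 3456 * log m ≤ m * (p * (1 - p)) ^ 3) :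
    ∃ lam, 0 ≤ lam ∧
      (p * exp lam + (1 - p)) ^ m * exp (-(lam * degBound p m))
        ≤ (m : ℝ) ^ (-(5 / 2) : ℝ) := by
  have hq0 : 0 < 1 - p := by linarith
  have hL0 : 0 ≤ log m := log_nonneg hm
  have hσ0 : 0 < m * p * (1 - p) := by positivity
  set t := √(6 * m * p * (1 - p) * log m) with ht
  have ht_sq : t ^ 2 = 6 * m * p * (1 - p) * log m := sq_sqrt (by positivity)
  -- the optimal parameter `t / σ²` of the Gaussian approximation, with `σ² = mp(1-p)`
  set lam := t / (m * p * (1 - p))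
  have hlam0 : 0 ≤ lam := by positivity
  have hlam_t : lam * t = 6 * log m := by
    rw [div_mul_eq_mul_div, ← sq, ht_sq, div_eq_iff hσ0.ne']
    ring
  have hσlam : m * p * (1 - p) * lam ^ 2 = 6 * log m := by
    rw [← hlam_t, sq, ← mul_assoc, mul_div_cancel₀ t hσ0.ne', mul_comm]
  -- `3456 = 6 · 24²` gives `λ ≤ p(1-p)/24`, so the cubic term costs at most a factor `√m`
  have hlam_le : lam ≤ p * (1 - p) / 24 := by
    refine (pow_le_pow_iff_left₀ hlam0 (by positivity) two_ne_zero).mp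
      (le_of_mul_le_mul_left ?_ hσ0)
    rw [hσlam]
    nlinarith
  have hlam1 : lam ≤ 1 := by nlinarith
  have hcube : 2 * m * lam ^ 3 ≤ log m / 2 := by
    refine le_of_mul_le_mul_right ?_ (by positivity : 0 < p * (1 - p))
    calc 2 * m * lam ^ 3 * (p * (1 - p)) = 2 * (m * p * (1 - p) * lam ^ 2) * lam := by ring
      _ ≤ 2 * (6 * log m) * (p * (1 - p) / 24) := by rw [hσlam]; gcongr
      _ = log m / 2 * (p * (1 - p)) := by ring
  refine ⟨lam, hlam0, ?_⟩
  calc (p * exp lam + (1 - p)) ^ m * exp (-(lam * degBound p m))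
      ≤ exp (p * lam + p * (1 - p) * lam ^ 2 / 2 + 2 * lam ^ 3) ^ m
          * exp (-(lam * degBound p m)) := by
        gcongr
        exact mul_exp_add_one_sub_le_exp hp0.le hp1.le hlam0 hlam1
    _ = exp (m * (p * lam + p * (1 - p) * lam ^ 2 / 2 + 2 * lam ^ 3) - lam * degBound p m) := by
        rw [← exp_nat_mul, ← exp_add, ← sub_eq_add_neg]
    _ ≤ exp (-(5 / 2) * log m) := by
        gcongr
        rw [degBound, ← ht]
        nlinarith
    _ = (m : ℝ) ^ (-(5 / 2) : ℝ) := by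
        rw [rpow_def_of_pos (by linarith), mul_comm]

lemma grPr_degBound_le_degIn_le (hp0 : 0 < p) (hp1 : p < 1) {m : ℕ} (hm : 1 ≤ (m : ℝ))
    (hK : 3456 * log m ≤ m * (p * (1 - p)) ^ 3) {S : Finset (Fin n)} (hS : #S ≤ m) (v : Fin n) :
    grPr n p {G | degBound p m ≤ degIn G S v} ≤ (m : ℝ) ^ (-(5 / 2) : ℝ) := by
  obtain ⟨lam, hlam0, hlam⟩ := exists_pow_mul_exp_neg_degBound_le hp0 hp1 hm hK
  set T := S.image (fun w => s(v, w))
  have hT : #((⊤ : SimpleGraph (Fin n)).edgeFinset ∩ T) ≤ m :=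
    (Finset.card_le_card Finset.inter_subset_right).trans (Finset.card_image_le.trans hS)
  have hbase : 1 ≤ p * exp lam + (1 - p) := by nlinarith [one_le_exp hlam0]
  simp only [degIn_eq_card_edgeFinset_inter]
  calc _ ≤ (p * exp lam + (1 - p)) ^ #((⊤ : SimpleGraph (Fin n)).edgeFinset ∩ T)
        * exp (-(lam * degBound p m)) := grPr_le_card_inter_le hp0.le hp1.le T _ hlam0
    _ ≤ (p * exp lam + (1 - p)) ^ m * exp (-(lam * degBound p m)) := by gcongr
    _ ≤ (m : ℝ) ^ (-(5 / 2) : ℝ) := hlam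

lemma grPr_largeDegreeEvent_le (hp0 : 0 < p) (hp1 : p < 1) {m : ℕ} (hm : 1 ≤ (m : ℝ))
    (hK : 3456 * log m ≤ m * (p * (1 - p)) ^ 3) :
    grPr n p (largeDegreeEvent n p m) ≤ (m : ℝ) ^ (-(3 / 2) : ℝ) := by
  calc grPr n p (largeDegreeEvent n p m)
      ≤ ∑ v ∈ lastVerts n m, grPr n p {G | degBound p m ≤ degIn G (lastVerts n m) v} :=
        grPr_le_sum_of_subset_biUnion hp0.le hp1.le _ _
          fun G ⟨v, hv, hG⟩ => Set.mem_biUnion hv hG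
    _ ≤ ∑ v ∈ lastVerts n m, (m : ℝ) ^ (-(5 / 2) : ℝ) :=
        Finset.sum_le_sum fun v _ =>
          grPr_degBound_le_degIn_le hp0 hp1 hm hK (card_lastVerts_le m) v
    _ ≤ m * (m : ℝ) ^ (-(5 / 2) : ℝ) := by
        rw [Finset.sum_const, nsmul_eq_mul]
        gcongr
        exact_mod_cast card_lastVerts_le m
    _ = (m : ℝ) ^ (-(3 / 2) : ℝ) := by
        rw [← rpow_one_add' (by positivity) (by norm_num)]
        norm_num

lemma compl_subset_biUnion_largeDegreeEvent {ε : ℝ} :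
    {G : SimpleGraph (Fin n) | ∀ k : ℕ, ε * n ≤ k →
      (k : ℝ) < n - (n : ℝ) ^ ((1 : ℝ) / 4) * log n ^ 2 →
      ∀ v ∈ lastVerts n (k + 14),
        (degIn G (lastVerts n (k + 14)) v : ℝ) < degBound p (k + 14)}ᶜ
      ⊆ ⋃ k ∈ (range n).filter (fun k : ℕ => ε * n ≤ k),
          largeDegreeEvent n p (k + 14) := by
  intro G hG
  simp only [Set.mem_compl_iff, Set.mem_ofPred_eq, not_forall, not_lt] at hG
  obtain ⟨k, hεk, hkn, v, hv, hdeg⟩ := hG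
  have hkn : k < n := by
    have : 0 ≤ (n : ℝ) ^ ((1 : ℝ) / 4) * log n ^ 2 := by positivity
    exact_mod_cast (show (k : ℝ) < n by linarith)
  exact Set.mem_biUnion (Finset.mem_filter.mpr ⟨Finset.mem_range.mpr hkn, hεk⟩) ⟨v, hv, hdeg⟩

lemma sum_grPr_largeDegreeEvent_le (hp0 : 0 < p) (hp1 : p < 1) {ε x₀ : ℝ}
    (hx₀ : ∀ x ≥ x₀, 1 ≤ x ∧ 3456 * log x ≤ x * (p * (1 - p)) ^ 3)
    (hn : x₀ ≤ ε * n) :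
    ∑ k ∈ (range n).filter (fun k : ℕ => ε * n ≤ k),
        grPr n p (largeDegreeEvent n p (k + 14))
      ≤ n * (ε * n) ^ (-(3 / 2) : ℝ) := by
  have hεn : 0 < ε * n := one_pos.trans_le (hx₀ _ hn).1
  calc _ ≤ ∑ k ∈ (range n).filter (fun k : ℕ => ε * n ≤ k), (ε * n) ^ (-(3 / 2) : ℝ) := by
        refine Finset.sum_le_sum fun k hk => ?_
        have hεk : ε * n ≤ ((k + 14 : ℕ) : ℝ) := by
          push_cast
          linarith [(Finset.mem_filter.mp hk).2]
        obtain ⟨hm, hK⟩ := hx₀ _ (hn.trans hεk)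
        refine (grPr_largeDegreeEvent_le hp0 hp1 hm hK).trans ?_
        exact rpow_le_rpow_of_nonpos hεn hεk (by norm_num)
    _ ≤ n * (ε * n) ^ (-(3 / 2) : ℝ) := by
        rw [Finset.sum_const, nsmul_eq_mul]
        gcongr
        exact_mod_cast (Finset.card_filter_le _ _).trans (Finset.card_range n).le

end GnpLemmas

/-- Claim 2: a.a.s., for every `k ∈ [εn, n − n^{1/4}ln²n)` and `ñ = k+14`, the subgraph induced
on the last `ñ` vertices has no vertex of degree at least `ñp + √(6ñp(1−p)ln ñ)`. -/
theorem aas_no_large_degrees (p : ℝ) (hp0 : 0 < p) (hp1 : p < 1)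
    (ε : ℝ) (hε0 : 0 < ε) :
    Tendsto (fun n : ℕ =>
        grPr n p {G | ∀ k : ℕ, ε * n ≤ k →
          (k : ℝ) < (n : ℝ) - (n : ℝ) ^ ((1 : ℝ) / 4) * (Real.log n) ^ 2 →
          ∀ v ∈ lastVerts n (k + 14),
            (degIn G (lastVerts n (k + 14)) v : ℝ) <
              ((k + 14 : ℕ) : ℝ) * p +
                Real.sqrt (6 * ((k + 14 : ℕ) : ℝ) * p * (1 - p) * Real.log ((k + 14 : ℕ) : ℝ))})
      atTop (nhds 1) := by
  have hpq : 0 < (p * (1 - p)) ^ 3 := by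
    have := sub_pos.mpr hp1
    positivity
  obtain ⟨x₀, hx₀⟩ := eventually_atTop.mp
    ((eventually_ge_atTop 1).and (eventually_const_mul_log_le_mul 3456 hpq))
  refine tendsto_of_tendsto_of_tendsto_of_le_of_le'
    (by simpa using (tendsto_natCast_mul_rpow_neg_three_halves hε0).const_sub 1)
    tendsto_const_nhds ?_ (.of_forall fun n => grPr_le_one hp0.le hp1.le _)
  filter_upwards [(tendsto_natCast_atTop_atTop.const_mul_atTop hε0).eventually_ge_atTop x₀]
    with n hn
  rw [sub_le_comm, ← grPr_compl]
  exact (grPr_le_sum_of_subset_biUnion hp0.le hp1.le _ _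
    compl_subset_biUnion_largeDegreeEvent).trans (sum_grPr_largeDegreeEvent_le hp0 hp1 hx₀ hn)
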